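/- arXiv:2601.19991 — 2 statements merged into one kernel-verified Lean document; each statement's English description precedes it below -/
import Mathlib

section
/- Let F be conjugate symplectic and diagonalizable, F = S D S⁻¹ with S invertible and D = diag(λ_1, …, λ_{2N}). Set K = Sᴴ J S. Then K is skew-Hermitian and invertible, K satisfies Dᴴ K D = K, and consequently the entry K_{ij} vanishes whenever conj(λ_i)·λ_j ≠ 1. -/
open Matrix

/-- The standard symplectic form matrix `J = [[0, I_N], [-I_N, 0]]`. -/
noncomputable def symplJ (N : ℕ) : Matrix (Fin N ⊕ Fin N) (Fin N ⊕ Fin N) ℂ :=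
  Matrix.fromBlocks 0 1 (-1) 0

/-- A `2N × 2N` complex matrix `F` is conjugate symplectic if `Fᴴ J F = J`. -/
def IsConjSymplectic {N : ℕ} (F : Matrix (Fin N ⊕ Fin N) (Fin N ⊕ Fin N) ℂ) : Prop :=
  Fᴴ * symplJ N * F = symplJ N

lemma symplJ_conjTranspose (N : ℕ) : (symplJ N)ᴴ = -(symplJ N) := by
  simp [symplJ, Matrix.fromBlocks_conjTranspose, Matrix.fromBlocks_neg]

lemma symplJ_isUnit (N : ℕ) : IsUnit (symplJ N) := by
  have h1 : symplJ N * -(symplJ N) = 1 := by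
    rw [Matrix.mul_neg]
    simp [symplJ, Matrix.fromBlocks_multiply, ← Matrix.fromBlocks_one, Matrix.fromBlocks_neg]
  have h2 : -(symplJ N) * symplJ N = 1 := by
    rw [Matrix.neg_mul]
    simp [symplJ, Matrix.fromBlocks_multiply, ← Matrix.fromBlocks_one, Matrix.fromBlocks_neg]
  exact ⟨⟨symplJ N, -(symplJ N), h1, h2⟩, rfl⟩

/-- For a diagonalizable conjugate symplectic matrix `F = S D S⁻¹`, the pairing
matrix `K = Sᴴ J S` is skew-Hermitian, invertible, satisfies `Dᴴ K D = K`, and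
`K i j = 0` whenever `conj(λ i) * λ j ≠ 1`. -/
theorem conjSymplectic_pairing_matrix (N : ℕ) (hN : 1 ≤ N)
    (F S : Matrix (Fin N ⊕ Fin N) (Fin N ⊕ Fin N) ℂ)
    (lam : (Fin N ⊕ Fin N) → ℂ)
    (hF : IsConjSymplectic F) (hS : IsUnit S)
    (hdiag : F = S * Matrix.diagonal lam * S⁻¹) :
    (S ᴴ * symplJ N * S)ᴴ = -(Sᴴ * symplJ N * S) ∧
    IsUnit (Sᴴ * symplJ N * S) ∧
    (Matrix.diagonal lam)ᴴ * (Sᴴ * symplJ N * S) * Matrix.diagonal lam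
      = Sᴴ * symplJ N * S ∧
    (∀ i j, (starRingEnd ℂ) (lam i) * lam j ≠ 1 → (Sᴴ * symplJ N * S) i j = 0) := by
  have hSd : IsUnit S.det := (Matrix.isUnit_iff_isUnit_det S).mp hS
  have hSinv : S⁻¹ * S = 1 := Matrix.nonsing_inv_mul S hSd
  have hskew : (S ᴴ * symplJ N * S)ᴴ = -(Sᴴ * symplJ N * S) := by
    simp [Matrix.conjTranspose_mul, symplJ_conjTranspose, Matrix.mul_assoc,
      Matrix.mul_neg, Matrix.neg_mul]
  have hunit : IsUnit (Sᴴ * symplJ N * S) := by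
    rw [Matrix.isUnit_iff_isUnit_det, Matrix.det_mul, Matrix.det_mul,
      Matrix.det_conjTranspose]
    exact ((hSd.star.mul ((Matrix.isUnit_iff_isUnit_det _).mp (symplJ_isUnit N))).mul hSd)
  have e1 : Sᴴ * Fᴴ = (Matrix.diagonal lam)ᴴ * Sᴴ := by
    rw [hdiag]
    simp only [Matrix.conjTranspose_mul]
    rw [← Matrix.mul_assoc, ← Matrix.mul_assoc, ← Matrix.conjTranspose_mul, hSinv]
    simp [Matrix.mul_assoc]
  have e2 : F * S = S * Matrix.diagonal lam := by
    rw [hdiag, Matrix.mul_assoc (S * Matrix.diagonal lam), hSinv, Matrix.mul_one]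
  have hmain : (Matrix.diagonal lam)ᴴ * (Sᴴ * symplJ N * S) * Matrix.diagonal lam
      = Sᴴ * symplJ N * S := by
    calc (Matrix.diagonal lam)ᴴ * (Sᴴ * symplJ N * S) * Matrix.diagonal lam
        = (Sᴴ * Fᴴ) * symplJ N * (F * S) := by
          rw [e1, e2]; simp only [Matrix.mul_assoc]
      _ = Sᴴ * (Fᴴ * symplJ N * F) * S := by simp only [Matrix.mul_assoc]
      _ = Sᴴ * symplJ N * S := by rw [hF]
  refine ⟨hskew, hunit, hmain, fun i j hne => ?_⟩
  have h := congrArg (fun M => M i j) hmain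
  simp only [Matrix.diagonal_conjTranspose, Matrix.diagonal_mul, Matrix.mul_diagonal,
    Pi.star_apply, Complex.star_def] at h
  have h0 : ((starRingEnd ℂ) (lam i) * lam j - 1) * (Sᴴ * symplJ N * S) i j = 0 := by
    linear_combination h
  rcases mul_eq_zero.mp h0 with h1 | h2
  · exact absurd (sub_eq_zero.mp h1) hne
  · exact h2
end

section
/- (Exponential generation in the diagonalizable case.) Let F be conjugate symplectic and diagonalizable, F = S D_F S⁻¹ with S invertible and D_F = diag(λ_1, …, λ_{2N}). Let D_G = diag(g_1, …, g_{2N}) be a diagonal matrix with exp(g_j) = λ_j for every j, and suppose that conj(g_i) + g_j = 0 whenever the entry (Sᴴ J S)_{ij} ≠ 0. Then G = S D_G S⁻¹ satisfies exp(G) = F and Gᴴ J + J G = 0. -/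
open Matrix

/-!
Conjugating by `S`, both claims reduce to statements about diagonal matrices. The exponential
of `diag g` is `diag (exp ∘ g) = D_F`. With `M = Sᴴ J S`, the Lie algebra condition
`Gᴴ J + J G = 0` becomes `D_Gᴴ M + M D_G = 0`, whose `(i, j)` entry is
`(conj (g i) + g j) M i j`; this vanishes by the pairing hypothesis.
-/

namespace Matrix

variable {n : Type*} [Fintype n] [DecidableEq n]

theorem exp_conj_diagonal {S : Matrix n n ℂ} (hS : IsUnit S) {g lam : n → ℂ}
    (hexp : ∀ j, Complex.exp (g j) = lam j) :
    NormedSpace.exp (S * diagonal g * S⁻¹) = S * diagonal lam * S⁻¹ := by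
  have hlam : NormedSpace.exp g = lam := funext fun j => by
    rw [Pi.coe_exp, ← Complex.exp_eq_exp_ℂ, hexp]
  rw [exp_conj S (diagonal g) hS, exp_diagonal, hlam]

variable {R : Type*} [CommRing R] [StarRing R]

theorem diagonal_star_mul_add_mul_diagonal_eq_zero {M : Matrix n n R} {g : n → R}
    (hpair : ∀ i j, M i j ≠ 0 → star (g i) + g j = 0) :
    diagonal (star g) * M + M * diagonal g = 0 := by
  ext i j
  rw [add_apply, diagonal_mul, mul_diagonal, zero_apply, Pi.star_apply]
  by_cases h : M i j = 0
  · simp [h]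
  · linear_combination M i j * hpair i j h

theorem conjTranspose_conj_mul_add_mul_conj {S : Matrix n n R} (hS : IsUnit S)
    (D J : Matrix n n R) :
    (S * D * S⁻¹)ᴴ * J + J * (S * D * S⁻¹)
      = S⁻¹ᴴ * (Dᴴ * (Sᴴ * J * S) + (Sᴴ * J * S) * D) * S⁻¹ := by
  have hdet : IsUnit S.det := (isUnit_iff_isUnit_det S).mp hS
  have hinv : S⁻¹ᴴ * Sᴴ = 1 := by
    rw [← conjTranspose_mul, mul_nonsing_inv _ hdet, conjTranspose_one]
  simp only [conjTranspose_mul, Matrix.mul_add, Matrix.add_mul, Matrix.mul_assoc,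
    mul_nonsing_inv _ hdet, Matrix.mul_one]
  simp only [← Matrix.mul_assoc, hinv, Matrix.one_mul]

end Matrix

theorem conjSymplectic_exponential_generation_general (N : ℕ)
    (F S : Matrix (Fin N ⊕ Fin N) (Fin N ⊕ Fin N) ℂ)
    (lam g : (Fin N ⊕ Fin N) → ℂ)
    (hS : IsUnit S)
    (hdiag : F = S * Matrix.diagonal lam * S⁻¹)
    (hexp : ∀ j, Complex.exp (g j) = lam j)
    (hpair : ∀ i j, (Sᴴ * symplJ N * S) i j ≠ 0 → (starRingEnd ℂ) (g i) + g j = 0) :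
    NormedSpace.exp (S * Matrix.diagonal g * S⁻¹) = F ∧
    (S * Matrix.diagonal g * S⁻¹)ᴴ * symplJ N
      + symplJ N * (S * Matrix.diagonal g * S⁻¹) = 0 := by
  refine ⟨hdiag ▸ exp_conj_diagonal hS hexp, ?_⟩
  rw [conjTranspose_conj_mul_add_mul_conj hS, diagonal_conjTranspose,
    diagonal_star_mul_add_mul_diagonal_eq_zero hpair, Matrix.mul_zero, Matrix.zero_mul]

/-- Exponential generation in the diagonalizable case: a diagonalizable conjugate
symplectic matrix `F = S D_F S⁻¹` admits a logarithm `G = S D_G S⁻¹` in the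
conjugate symplectic Lie algebra, provided the branch choices satisfy the
pairing condition `conj(g i) + g j = 0` whenever `(Sᴴ J S) i j ≠ 0`. -/
theorem conjSymplectic_exponential_generation (N : ℕ) (hN : 1 ≤ N)
    (F S : Matrix (Fin N ⊕ Fin N) (Fin N ⊕ Fin N) ℂ)
    (lam g : (Fin N ⊕ Fin N) → ℂ)
    (hF : IsConjSymplectic F) (hS : IsUnit S)
    (hdiag : F = S * Matrix.diagonal lam * S⁻¹)
    (hexp : ∀ j, Complex.exp (g j) = lam j)
    (hpair : ∀ i j, (Sᴴ * symplJ N * S) i j ≠ 0 → (starRingEnd ℂ) (g i) + g j = 0) :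
    NormedSpace.exp (S * Matrix.diagonal g * S⁻¹) = F ∧
    (S * Matrix.diagonal g * S⁻¹)ᴴ * symplJ N
      + symplJ N * (S * Matrix.diagonal g * S⁻¹) = 0 :=
  conjSymplectic_exponential_generation_general N F S lam g hS hdiag hexp hpair
end
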